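/- arXiv:2206.14080 — 4 statements merged into one kernel-verified Lean document; each statement's English description precedes it below -/
import Mathlib

section
/- Let α be a Hurwitz integer whose norm N(α) = p is a prime number, and let z be an integer, identified with the quaternion z·1. Then there exists a Hurwitz integer λ with z = λ·α if and only if p divides z. -/
/-!
The norm is multiplicative, so `z = λ α` gives `z ^ 2 = N(λ) p` with `N(λ) ∈ ℤ`, whence `p ∣ z`.
Conversely, if `z = m p` then `z = (m ᾱ) α` because `ᾱ α = N(α) = p`, and `m ᾱ` is again Hurwitz.
-/

open Quaternion

noncomputable section

/-- Nearest-integer rounding: ties round up if `x ≤ 0`, down if `x > 0`. -/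
def rndInt (x : ℚ) : ℤ := if x ≤ 0 then ⌊x + 1/2⌋ else ⌈x - 1/2⌉

/-- Nearest-half-integer rounding: ties round up if `x ≤ 0`, down if `x > 0`. -/
def rndHalf (x : ℚ) : ℚ := (rndInt (x - 1/2) : ℚ) + 1/2

/-- The quaternion `a + b i + c j + d k` over `ℚ`. -/
def quat (a b c d : ℚ) : ℍ[ℚ] := ⟨a, b, c, d⟩

/-- Componentwise nearest-integer rounding of a quaternion. -/
def qRound (q : ℍ[ℚ]) : ℍ[ℚ] :=
  quat (rndInt q.re) (rndInt q.imI) (rndInt q.imJ) (rndInt q.imK)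

/-- Componentwise nearest-half-integer rounding of a quaternion. -/
def qRoundHalf (q : ℍ[ℚ]) : ℍ[ℚ] :=
  quat (rndHalf q.re) (rndHalf q.imI) (rndHalf q.imJ) (rndHalf q.imK)

/-- A Hurwitz integer: all components in `ℤ`, or all components in `ℤ + 1/2`. -/
def IsHurwitz (q : ℍ[ℚ]) : Prop :=
  ((∃ n : ℤ, q.re = n) ∧ (∃ n : ℤ, q.imI = n) ∧ (∃ n : ℤ, q.imJ = n) ∧ (∃ n : ℤ, q.imK = n)) ∨
  ((∃ n : ℤ, q.re = n + 1/2) ∧ (∃ n : ℤ, q.imI = n + 1/2) ∧ (∃ n : ℤ, q.imJ = n + 1/2) ∧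
    (∃ n : ℤ, q.imK = n + 1/2))

/-- `μ⁽¹⁾_α(z) = z − α·⌊(ᾱ·z)/N(α)⌉`. -/
def mu1 (α : ℍ[ℚ]) (z : ℤ) : ℍ[ℚ] :=
  (z : ℍ[ℚ]) - α * qRound ((star α * (z : ℍ[ℚ])) / ((normSq α : ℚ) : ℍ[ℚ]))

/-- `μ⁽²⁾_α(z) = z − α·⌊⌊(ᾱ·z)/N(α)⌉⌉`. -/
def mu2 (α : ℍ[ℚ]) (z : ℤ) : ℍ[ℚ] :=
  (z : ℍ[ℚ]) - α * qRoundHalf ((star α * (z : ℍ[ℚ])) / ((normSq α : ℚ) : ℍ[ℚ]))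

/-- The two remainder maps, indexed by `Fin 2` (`0 ↦ μ⁽¹⁾`, `1 ↦ μ⁽²⁾`). -/
def mu (α : ℍ[ℚ]) (i : Fin 2) (z : ℤ) : ℍ[ℚ] :=
  if i = 0 then mu1 α z else mu2 α z

/-- The four components of a quaternion. -/
def comp : Fin 4 → ℍ[ℚ] → ℚ
  | 0, q => q.re
  | 1, q => q.imI
  | 2, q => q.imJ
  | 3, q => q.imK

namespace IsHurwitz

theorem exists_normSq_eq_intCast {q : ℍ[ℚ]} (h : IsHurwitz q) : ∃ k : ℤ, normSq q = k := by
  rcases h with ⟨⟨a, ha⟩, ⟨b, hb⟩, ⟨c, hc⟩, ⟨d, hd⟩⟩ | ⟨⟨a, ha⟩, ⟨b, hb⟩, ⟨c, hc⟩, ⟨d, hd⟩⟩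
  · exact ⟨a ^ 2 + b ^ 2 + c ^ 2 + d ^ 2, by rw [normSq_def', ha, hb, hc, hd]; push_cast; ring⟩
  · exact ⟨a ^ 2 + a + b ^ 2 + b + c ^ 2 + c + d ^ 2 + d + 1,
      by rw [normSq_def', ha, hb, hc, hd]; push_cast; ring⟩

theorem star {q : ℍ[ℚ]} (h : IsHurwitz q) : IsHurwitz (star q) := by
  have neg_int (x : ℚ) : (∃ n : ℤ, x = n) → ∃ n : ℤ, -x = n :=
    fun ⟨n, hn⟩ => ⟨-n, by rw [hn]; push_cast; ring⟩
  have neg_half (x : ℚ) : (∃ n : ℤ, x = n + 1 / 2) → ∃ n : ℤ, -x = n + 1 / 2 :=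
    fun ⟨n, hn⟩ => ⟨-n - 1, by rw [hn]; push_cast; ring⟩
  simp only [IsHurwitz, re_star, imI_star, imJ_star, imK_star]
  rcases h with ⟨ha, hb, hc, hd⟩ | ⟨ha, hb, hc, hd⟩
  · exact Or.inl ⟨ha, neg_int _ hb, neg_int _ hc, neg_int _ hd⟩
  · exact Or.inr ⟨ha, neg_half _ hb, neg_half _ hc, neg_half _ hd⟩

theorem intCast_mul {q : ℍ[ℚ]} (h : IsHurwitz q) (m : ℤ) : IsHurwitz ((m : ℍ[ℚ]) * q) := by
  rw [← coe_intCast, coe_mul_eq_smul]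
  simp only [IsHurwitz, re_smul, imI_smul, imJ_smul, imK_smul, smul_eq_mul]
  rcases h with ⟨ha, hb, hc, hd⟩ | ⟨ha, hb, hc, hd⟩
  · have mul_int (x : ℚ) : (∃ n : ℤ, x = n) → ∃ n : ℤ, m * x = n :=
      fun ⟨n, hn⟩ => ⟨m * n, by rw [hn]; push_cast; ring⟩
    exact Or.inl ⟨mul_int _ ha, mul_int _ hb, mul_int _ hc, mul_int _ hd⟩
  · rcases Int.even_or_odd m with ⟨t, ht⟩ | ⟨t, ht⟩
    · have mul_half (x : ℚ) : (∃ n : ℤ, x = n + 1 / 2) → ∃ n : ℤ, m * x = n :=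
        fun ⟨n, hn⟩ => ⟨m * n + t, by rw [hn, ht]; push_cast; ring⟩
      exact Or.inl ⟨mul_half _ ha, mul_half _ hb, mul_half _ hc, mul_half _ hd⟩
    · have mul_half (x : ℚ) : (∃ n : ℤ, x = n + 1 / 2) → ∃ n : ℤ, m * x = n + 1 / 2 :=
        fun ⟨n, hn⟩ => ⟨m * n + t, by rw [hn, ht]; push_cast; ring⟩
      exact Or.inr ⟨mul_half _ ha, mul_half _ hb, mul_half _ hc, mul_half _ hd⟩

theorem dvd_sq_of_intCast_eq_mul {lam α : ℍ[ℚ]} (hlam : IsHurwitz lam) {n z : ℤ}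
    (hN : normSq α = n) (h : (z : ℍ[ℚ]) = lam * α) : n ∣ z ^ 2 := by
  obtain ⟨k, hk⟩ := hlam.exists_normSq_eq_intCast
  have hnorm : normSq (z : ℍ[ℚ]) = normSq lam * normSq α := by rw [h, map_mul]
  rw [normSq_intCast, hk, hN] at hnorm
  exact ⟨k, by rw [mul_comm]; exact_mod_cast hnorm⟩

end IsHurwitz

/-- for a Hurwitz integer `α` of prime norm `p` and `z ∈ ℤ`,
`z = λ·α` for some Hurwitz integer `λ` iff `p ∣ z`. -/
theorem stmt_3 (α : ℍ[ℚ]) (hH : IsHurwitz α) (p : ℕ) (hp : p.Prime)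
    (hN : normSq α = (p : ℚ)) (z : ℤ) :
    (∃ lam : ℍ[ℚ], IsHurwitz lam ∧ (z : ℍ[ℚ]) = lam * α) ↔ (p : ℤ) ∣ z := by
  constructor
  · rintro ⟨lam, hlam, hz⟩
    exact (Nat.prime_iff_prime_int.mp hp).dvd_of_dvd_pow
      (hlam.dvd_sq_of_intCast_eq_mul (by exact_mod_cast hN) hz)
  · rintro ⟨m, rfl⟩
    refine ⟨(m : ℍ[ℚ]) * star α, hH.star.intCast_mul m, ?_⟩
    rw [mul_assoc, star_mul_self, hN]
    push_cast
    exact Nat.cast_commute p _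
end
end

section
/- Let α be a prime Hurwitz integer with N(α) = p. Then the map z ↦ μ⁽¹⁾_α(z) = z − α·⌊(ᾱ·z)/p⌉ is injective on {0, 1, …, p−1}; consequently the set {μ⁽¹⁾_α(z) : z ∈ {0, …, p−1}} has exactly p elements. -/
/-! If `μ⁽¹⁾_α(z₁) = μ⁽¹⁾_α(z₂)` then `z₁ - z₂ = α β` with `β` a difference of two roundings,
hence a quaternion with integer components. Taking norms gives `(z₁ - z₂)² = p · N(β)` with
`N(β) ∈ ℤ`, so the prime `p` divides `z₁ - z₂`, which forces `z₁ = z₂` when `|z₁ - z₂| < p`. -/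

open Quaternion

lemma exists_normSq_qRound_sub_qRound_eq_intCast (x y : ℍ[ℚ]) :
    ∃ n : ℤ, normSq (qRound x - qRound y) = n :=
  ⟨(rndInt x.re - rndInt y.re) ^ 2 + (rndInt x.imI - rndInt y.imI) ^ 2 +
      (rndInt x.imJ - rndInt y.imJ) ^ 2 + (rndInt x.imK - rndInt y.imK) ^ 2, by
    rw [normSq_def']
    push_cast
    rfl⟩

lemma mu1_sub_mu1 (α : ℍ[ℚ]) (z₁ z₂ : ℤ) :
    mu1 α z₁ - mu1 α z₂ = ((z₁ - z₂ : ℤ) : ℍ[ℚ]) -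
      α * (qRound (star α * (z₁ : ℍ[ℚ]) / ((normSq α : ℚ) : ℍ[ℚ])) -
        qRound (star α * (z₂ : ℍ[ℚ]) / ((normSq α : ℚ) : ℍ[ℚ]))) := by
  rw [mu1, mu1, mul_sub]
  push_cast
  abel

lemma prime_dvd_of_intCast_eq_mul {α β : ℍ[ℚ]} {p : ℕ} (hp : p.Prime) (hN : normSq α = p)
    {m n : ℤ} (hβ : normSq β = n) (h : (m : ℍ[ℚ]) = α * β) : (p : ℤ) ∣ m := by
  have hsq : m ^ 2 = p * n := by
    have := congrArg normSq h
    rw [normSq_intCast, map_mul, hN, hβ] at this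
    exact_mod_cast this
  exact (Nat.prime_iff_prime_int.mp hp).dvd_of_dvd_pow (Dvd.intro n hsq.symm)

lemma mu1_injOn_Ico {α : ℍ[ℚ]} {p : ℕ} (hp : p.Prime) (hN : normSq α = p) (a : ℤ) :
    Set.InjOn (mu1 α) (Set.Ico a (a + p)) := by
  intro z₁ h₁ z₂ h₂ heq
  obtain ⟨n, hn⟩ := exists_normSq_qRound_sub_qRound_eq_intCast
    (star α * (z₁ : ℍ[ℚ]) / ((normSq α : ℚ) : ℍ[ℚ]))
    (star α * (z₂ : ℍ[ℚ]) / ((normSq α : ℚ) : ℍ[ℚ]))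
  have hdiff := mu1_sub_mu1 α z₁ z₂
  rw [heq, sub_self, eq_comm, sub_eq_zero] at hdiff
  have hdvd := prime_dvd_of_intCast_eq_mul hp hN hn hdiff
  have hlt : |z₁ - z₂| < p := by
    rw [abs_sub_lt_iff]
    simp only [Set.mem_Ico] at h₁ h₂
    omega
  exact sub_eq_zero.mp (Int.eq_zero_of_abs_lt_dvd hdvd hlt)

theorem stmt_4_general (α : ℍ[ℚ]) (p : ℕ) (hp : p.Prime)
    (hN : normSq α = (p : ℚ)) :
    Set.InjOn (fun z : ℤ => mu1 α z) (Set.Ico (0 : ℤ) (p : ℤ)) ∧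
    ((fun z : ℤ => mu1 α z) '' Set.Ico (0 : ℤ) (p : ℤ)).ncard = p := by
  have hinj : Set.InjOn (mu1 α) (Set.Ico 0 (p : ℤ)) := by
    simpa using mu1_injOn_Ico hp hN 0
  refine ⟨hinj, ?_⟩
  rw [hinj.ncard_image, ← Finset.coe_Ico, Set.ncard_coe_finset, Int.card_Ico]
  simp

/-- `z ↦ μ⁽¹⁾_α(z)` is injective on `{0, 1, …, p−1}`, and its image there
has exactly `p` elements. -/
theorem stmt_4 (α : ℍ[ℚ]) (hH : IsHurwitz α) (p : ℕ) (hp : p.Prime)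
    (hN : normSq α = (p : ℚ)) :
    Set.InjOn (fun z : ℤ => mu1 α z) (Set.Ico (0 : ℤ) (p : ℤ)) ∧
    ((fun z : ℤ => mu1 α z) '' Set.Ico (0 : ℤ) (p : ℤ)).ncard = p :=
  stmt_4_general α p hp hN
end

section
/- Let α = α₁ + α₂i + α₃j + α₄k be a prime Hurwitz integer all of whose components α₁, α₂, α₃, α₄ lie in ℤ. Then μ⁽¹⁾_α(N(α)) = N(α) − α·⌊ᾱ⌉ = 0, and there exists a Hurwitz integer λ (all of whose components are ±1/2) with μ⁽²⁾_α(N(α)) = N(α) − α·⌊⌊ᾱ⌉⌉ = α·λ, so that μ⁽²⁾_α(N(α)) ≡ 0 (mod α). -/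
open Quaternion

noncomputable section

/-! Since `N(α) = α ᾱ`, the quotient `ᾱ N(α) / N(α)` is `ᾱ` itself, whose components are
integers. Hence `⌊ᾱ⌉ = ᾱ` and `μ⁽¹⁾_α(N(α)) = α ᾱ - α ᾱ = 0`, while `⌊⌊ᾱ⌉⌉` moves every integer
component of `ᾱ` by `±1/2`, so that `μ⁽²⁾_α(N(α)) = α (ᾱ - ⌊⌊ᾱ⌉⌉)` with `ᾱ - ⌊⌊ᾱ⌉⌉ ∈ {±1/2}⁴`. -/

def IsLipschitz (q : ℍ[ℚ]) : Prop :=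
  (∃ n : ℤ, q.re = n) ∧ (∃ n : ℤ, q.imI = n) ∧ (∃ n : ℤ, q.imJ = n) ∧ (∃ n : ℤ, q.imK = n)

lemma rndInt_intCast (n : ℤ) : rndInt n = n := by
  unfold rndInt
  split
  · rw [add_comm, Int.floor_add_intCast]
    norm_num
  · rw [sub_eq_neg_add, Int.ceil_add_intCast]
    norm_num

lemma intCast_sub_rndHalf (n : ℤ) : (n : ℚ) - rndHalf n = 1/2 ∨ (n : ℚ) - rndHalf n = -1/2 := by
  unfold rndHalf rndInt
  split_ifs
  · rw [sub_add_cancel, Int.floor_intCast]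
    norm_num
  · rw [show (n : ℚ) - 1/2 - 1/2 = ((n - 1 : ℤ) : ℚ) by push_cast; ring, Int.ceil_intCast]
    push_cast
    left
    ring

lemma IsLipschitz.star {q : ℍ[ℚ]} (hq : IsLipschitz q) : IsLipschitz (star q) := by
  obtain ⟨⟨a, ha⟩, ⟨b, hb⟩, ⟨c, hc⟩, ⟨d, hd⟩⟩ := hq
  exact ⟨⟨a, by simp [ha]⟩, ⟨-b, by simp [hb]⟩, ⟨-c, by simp [hc]⟩, ⟨-d, by simp [hd]⟩⟩

lemma IsLipschitz.exists_comp_eq {q : ℍ[ℚ]} (hq : IsLipschitz q) (i : Fin 4) :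
    ∃ n : ℤ, comp i q = n := by
  fin_cases i
  exacts [hq.1, hq.2.1, hq.2.2.1, hq.2.2.2]

lemma qRound_eq_self {q : ℍ[ℚ]} (hq : IsLipschitz q) : qRound q = q := by
  obtain ⟨⟨a, ha⟩, ⟨b, hb⟩, ⟨c, hc⟩, ⟨d, hd⟩⟩ := hq
  ext <;> simp [qRound, quat, ha, hb, hc, hd, rndInt_intCast]

lemma comp_sub_qRoundHalf (q : ℍ[ℚ]) (i : Fin 4) :
    comp i (q - qRoundHalf q) = comp i q - rndHalf (comp i q) := by
  fin_cases i <;> rfl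

lemma comp_sub_qRoundHalf_eq_half {q : ℍ[ℚ]} (hq : IsLipschitz q) (i : Fin 4) :
    comp i (q - qRoundHalf q) = 1/2 ∨ comp i (q - qRoundHalf q) = -1/2 := by
  obtain ⟨n, hn⟩ := hq.exists_comp_eq i
  rw [comp_sub_qRoundHalf, hn]
  exact intCast_sub_rndHalf n

lemma isHurwitz_of_comp_eq_half {q : ℍ[ℚ]} (hq : ∀ i, comp i q = 1/2 ∨ comp i q = -1/2) :
    IsHurwitz q := by
  have half : ∀ x : ℚ, (x = 1/2 ∨ x = -1/2) → ∃ n : ℤ, x = n + 1/2 := by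
    rintro x (rfl | rfl)
    exacts [⟨0, by norm_num⟩, ⟨-1, by norm_num⟩]
  exact Or.inr ⟨half _ (hq 0), half _ (hq 1), half _ (hq 2), half _ (hq 3)⟩

lemma star_mul_normSq_div_normSq (α : ℍ[ℚ]) :
    star α * ((normSq α : ℚ) : ℍ[ℚ]) / ((normSq α : ℚ) : ℍ[ℚ]) = star α := by
  rcases eq_or_ne α 0 with rfl | hα
  · simp
  · exact mul_div_cancel_right₀ _ (coe_injective.ne (normSq_ne_zero.mpr hα))

lemma mu1_of_normSq_eq {α : ℍ[ℚ]} {z : ℤ} (hN : normSq α = z) :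
    mu1 α z = (z : ℍ[ℚ]) - α * qRound (star α) := by
  have hz : (z : ℍ[ℚ]) = ((normSq α : ℚ) : ℍ[ℚ]) := by rw [hN]; rfl
  rw [mu1, hz, star_mul_normSq_div_normSq]

lemma mu2_of_normSq_eq {α : ℍ[ℚ]} {z : ℤ} (hN : normSq α = z) :
    mu2 α z = (z : ℍ[ℚ]) - α * qRoundHalf (star α) := by
  have hz : (z : ℍ[ℚ]) = ((normSq α : ℚ) : ℍ[ℚ]) := by rw [hN]; rfl
  rw [mu2, hz, star_mul_normSq_div_normSq]

theorem stmt_13_general (α : ℍ[ℚ])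
    (hc : (∃ n : ℤ, α.re = n) ∧ (∃ n : ℤ, α.imI = n) ∧ (∃ n : ℤ, α.imJ = n) ∧
      (∃ n : ℤ, α.imK = n))
    (p : ℕ) (hN : normSq α = (p : ℚ)) :
    mu1 α (p : ℤ) = ((p : ℤ) : ℍ[ℚ]) - α * qRound (star α) ∧
    mu1 α (p : ℤ) = 0 ∧
    mu2 α (p : ℤ) = ((p : ℤ) : ℍ[ℚ]) - α * qRoundHalf (star α) ∧
    ∃ lam : ℍ[ℚ], IsHurwitz lam ∧
      (∀ c : Fin 4, comp c lam = 1/2 ∨ comp c lam = -1/2) ∧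
      mu2 α (p : ℤ) = α * lam := by
  have hN' : normSq α = ((p : ℤ) : ℚ) := by exact_mod_cast hN
  have hp_eq : ((p : ℤ) : ℍ[ℚ]) = α * star α := by
    rw [self_mul_star, hN']
    rfl
  have hstar : IsLipschitz (star α) := IsLipschitz.star hc
  have hlam := comp_sub_qRoundHalf_eq_half hstar
  refine ⟨mu1_of_normSq_eq hN', ?_, mu2_of_normSq_eq hN', star α - qRoundHalf (star α),
    isHurwitz_of_comp_eq_half hlam, hlam, ?_⟩
  · rw [mu1_of_normSq_eq hN', qRound_eq_self hstar, hp_eq, sub_self]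
  · rw [mu2_of_normSq_eq hN', hp_eq, mul_sub]

/-- for a prime Hurwitz integer `α` with integer components,
`μ⁽¹⁾_α(N(α)) = N(α) − α·⌊ᾱ⌉ = 0`, and `μ⁽²⁾_α(N(α)) = N(α) − α·⌊⌊ᾱ⌉⌉ = α·λ` for some
Hurwitz integer `λ` all of whose components are `±1/2`. -/
theorem stmt_13 (α : ℍ[ℚ])
    (hc : (∃ n : ℤ, α.re = n) ∧ (∃ n : ℤ, α.imI = n) ∧ (∃ n : ℤ, α.imJ = n) ∧
      (∃ n : ℤ, α.imK = n))
    (p : ℕ) (hp : p.Prime) (hN : normSq α = (p : ℚ)) :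
    mu1 α (p : ℤ) = ((p : ℤ) : ℍ[ℚ]) - α * qRound (star α) ∧
    mu1 α (p : ℤ) = 0 ∧
    mu2 α (p : ℤ) = ((p : ℤ) : ℍ[ℚ]) - α * qRoundHalf (star α) ∧
    ∃ lam : ℍ[ℚ], IsHurwitz lam ∧
      (∀ c : Fin 4, comp c lam = 1/2 ∨ comp c lam = -1/2) ∧
      mu2 α (p : ℤ) = α * lam :=
  stmt_13_general α hc p hN
end
end

section
/- Let α = α₁ + α₂i + α₃j + α₄k be a prime Hurwitz integer all of whose components α₁, α₂, α₃, α₄ lie in ℤ + 1/2. Then μ⁽²⁾_α(N(α)) = N(α) − α·⌊⌊ᾱ⌉⌉ = 0, and there exists a Hurwitz integer λ (all of whose components are ±1/2) with μ⁽¹⁾_α(N(α)) = N(α) − α·⌊ᾱ⌉ = α·λ, so that μ⁽¹⁾_α(N(α)) ≡ 0 (mod α). -/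
open Quaternion

noncomputable section

/-!
Since `N(α) = α ᾱ`, the quotient `ᾱ N(α) / N(α)` is exactly `ᾱ`, whose components are
half-integers. Half-integer rounding fixes `ᾱ`, so `μ⁽²⁾_α(N(α)) = N(α) − α ᾱ = 0`; integer rounding
moves each component of `ᾱ` by `±1/2`, so `μ⁽¹⁾_α(N(α)) = α (ᾱ − ⌊ᾱ⌉)` with `ᾱ − ⌊ᾱ⌉ ∈ {±1/2}⁴`.
-/

def IsHalfInt (x : ℚ) : Prop := ∃ n : ℤ, x = n + 1/2

namespace IsHalfInt

variable {x : ℚ}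

lemma neg (hx : IsHalfInt x) : IsHalfInt (-x) := by
  obtain ⟨n, rfl⟩ := hx
  exact ⟨-n - 1, by push_cast; ring⟩

lemma ne_zero (hx : IsHalfInt x) : x ≠ 0 := by
  obtain ⟨n, rfl⟩ := hx
  intro h
  have h' : (2 * n + 1 : ℤ) = 0 := by exact_mod_cast (by linarith : (2 * n + 1 : ℚ) = 0)
  omega

lemma rndHalf_eq (hx : IsHalfInt x) : rndHalf x = x := by
  obtain ⟨n, rfl⟩ := hx
  rw [rndHalf, add_sub_cancel_right, rndInt_intCast]

lemma sub_rndInt (hx : IsHalfInt x) : x - rndInt x = 1/2 ∨ x - rndInt x = -1/2 := by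
  obtain ⟨n, rfl⟩ := hx
  unfold rndInt
  split
  · right
    rw [add_assoc, show (1/2 + 1/2 : ℚ) = (1 : ℤ) by norm_num, ← Int.cast_add, Int.floor_intCast]
    push_cast; ring
  · left
    rw [add_sub_cancel_right, Int.ceil_intCast]
    ring

end IsHalfInt

lemma isHalfInt_of_eq_half_or_eq_neg_half {x : ℚ} (h : x = 1/2 ∨ x = -1/2) : IsHalfInt x := by
  rcases h with rfl | rfl
  · exact ⟨0, by norm_num⟩
  · exact ⟨-1, by norm_num⟩

def HasHalfIntComps (q : ℍ[ℚ]) : Prop :=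
  IsHalfInt q.re ∧ IsHalfInt q.imI ∧ IsHalfInt q.imJ ∧ IsHalfInt q.imK

namespace HasHalfIntComps

variable {q : ℍ[ℚ]}

lemma star (hq : HasHalfIntComps q) : HasHalfIntComps (star q) := by
  obtain ⟨h₁, h₂, h₃, h₄⟩ := hq
  rw [HasHalfIntComps, re_star, imI_star, imJ_star, imK_star]
  exact ⟨h₁, h₂.neg, h₃.neg, h₄.neg⟩

lemma ne_zero (hq : HasHalfIntComps q) : q ≠ 0 := fun h =>
  hq.1.ne_zero (by rw [h, re_zero])

lemma qRoundHalf_eq (hq : HasHalfIntComps q) : qRoundHalf q = q := by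
  obtain ⟨h₁, h₂, h₃, h₄⟩ := hq
  ext <;> simp only [qRoundHalf, quat, h₁.rndHalf_eq, h₂.rndHalf_eq, h₃.rndHalf_eq, h₄.rndHalf_eq]

lemma comp_sub_qRound (hq : HasHalfIntComps q) (c : Fin 4) :
    comp c (q - qRound q) = 1/2 ∨ comp c (q - qRound q) = -1/2 := by
  obtain ⟨h₁, h₂, h₃, h₄⟩ := hq
  fin_cases c
  · exact h₁.sub_rndInt
  · exact h₂.sub_rndInt
  · exact h₃.sub_rndInt
  · exact h₄.sub_rndInt

end HasHalfIntComps

lemma isHurwitz_of_comp_eq_half_or_eq_neg_half {q : ℍ[ℚ]}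
    (h : ∀ c : Fin 4, comp c q = 1/2 ∨ comp c q = -1/2) : IsHurwitz q :=
  Or.inr ⟨isHalfInt_of_eq_half_or_eq_neg_half (h 0), isHalfInt_of_eq_half_or_eq_neg_half (h 1),
    isHalfInt_of_eq_half_or_eq_neg_half (h 2), isHalfInt_of_eq_half_or_eq_neg_half (h 3)⟩

section NormSq

variable {α : ℍ[ℚ]} {z : ℤ}

lemma intCast_eq_coe_normSq (hz : normSq α = z) : (z : ℍ[ℚ]) = ((normSq α : ℚ) : ℍ[ℚ]) := by
  rw [hz]; exact (coe_intCast z).symm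

lemma mul_star_eq_intCast (hz : normSq α = z) : α * star α = (z : ℍ[ℚ]) := by
  rw [intCast_eq_coe_normSq hz]; exact self_mul_star α

lemma star_mul_intCast_div_normSq (hα : α ≠ 0) (hz : normSq α = z) :
    star α * (z : ℍ[ℚ]) / ((normSq α : ℚ) : ℍ[ℚ]) = star α := by
  have hN : ((normSq α : ℚ) : ℍ[ℚ]) ≠ 0 := (coe_injective.ne (normSq_ne_zero.2 hα) :)
  rw [intCast_eq_coe_normSq hz, mul_div_assoc, div_self hN, mul_one]

lemma mu1_eq_of_normSq_eq (hα : α ≠ 0) (hz : normSq α = z) :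
    mu1 α z = (z : ℍ[ℚ]) - α * qRound (star α) := by
  rw [mu1, star_mul_intCast_div_normSq hα hz]

lemma mu2_eq_of_normSq_eq (hα : α ≠ 0) (hz : normSq α = z) :
    mu2 α z = (z : ℍ[ℚ]) - α * qRoundHalf (star α) := by
  rw [mu2, star_mul_intCast_div_normSq hα hz]

end NormSq

theorem stmt_14_general (α : ℍ[ℚ])
    (hc : (∃ n : ℤ, α.re = n + 1/2) ∧ (∃ n : ℤ, α.imI = n + 1/2) ∧
      (∃ n : ℤ, α.imJ = n + 1/2) ∧ (∃ n : ℤ, α.imK = n + 1/2))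
    (p : ℕ) (hN : normSq α = (p : ℚ)) :
    mu2 α (p : ℤ) = ((p : ℤ) : ℍ[ℚ]) - α * qRoundHalf (star α) ∧
    mu2 α (p : ℤ) = 0 ∧
    mu1 α (p : ℤ) = ((p : ℤ) : ℍ[ℚ]) - α * qRound (star α) ∧
    ∃ lam : ℍ[ℚ], IsHurwitz lam ∧
      (∀ c : Fin 4, comp c lam = 1/2 ∨ comp c lam = -1/2) ∧
      mu1 α (p : ℤ) = α * lam := by
  have hα : HasHalfIntComps α := hc
  have hz : normSq α = ((p : ℤ) : ℚ) := by exact_mod_cast hN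
  have hmu2 := mu2_eq_of_normSq_eq hα.ne_zero hz
  have hmu1 := mu1_eq_of_normSq_eq hα.ne_zero hz
  have hlam := hα.star.comp_sub_qRound
  refine ⟨hmu2, ?_, hmu1, star α - qRound (star α),
    isHurwitz_of_comp_eq_half_or_eq_neg_half hlam, hlam, ?_⟩
  · rw [hmu2, hα.star.qRoundHalf_eq, mul_star_eq_intCast hz, sub_self]
  · rw [hmu1, mul_sub, mul_star_eq_intCast hz]

/-- for a prime Hurwitz integer `α` with half-integer components,
`μ⁽²⁾_α(N(α)) = N(α) − α·⌊⌊ᾱ⌉⌉ = 0`, and `μ⁽¹⁾_α(N(α)) = N(α) − α·⌊ᾱ⌉ = α·λ` for some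
Hurwitz integer `λ` all of whose components are `±1/2`. -/
theorem stmt_14 (α : ℍ[ℚ])
    (hc : (∃ n : ℤ, α.re = n + 1/2) ∧ (∃ n : ℤ, α.imI = n + 1/2) ∧
      (∃ n : ℤ, α.imJ = n + 1/2) ∧ (∃ n : ℤ, α.imK = n + 1/2))
    (p : ℕ) (hp : p.Prime) (hN : normSq α = (p : ℚ)) :
    mu2 α (p : ℤ) = ((p : ℤ) : ℍ[ℚ]) - α * qRoundHalf (star α) ∧
    mu2 α (p : ℤ) = 0 ∧
    mu1 α (p : ℤ) = ((p : ℤ) : ℍ[ℚ]) - α * qRound (star α) ∧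
    ∃ lam : ℍ[ℚ], IsHurwitz lam ∧
      (∀ c : Fin 4, comp c lam = 1/2 ∨ comp c lam = -1/2) ∧
      mu1 α (p : ℤ) = α * lam :=
  stmt_14_general α hc p hN
end
end
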